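/- arXiv:1209.2672 — 8 statements merged into one kernel-verified Lean document; each statement's English description precedes it below -/
import Mathlib

section
/- The characteristic polynomial of M(λ) (as a polynomial in x) factors as (x − 1)·(x − (1 + (5+√5)/2·λ))·(x − (1 + (5−√5)/2·λ))·(x − (1 + (3+√5)/2·λ))·(x − (1 + (3−√5)/2·λ)), i.e., the eigenvalues of M(λ) are 1, 1 + (5±√5)/2·λ, and 1 + (3±√5)/2·λ. -/
/-!
Expanding the determinant of the tridiagonal characteristic matrix, the characteristic polynomial
becomes `y (y² - 5λy + 5λ²) (y² - 3λy + λ²)` in `y = x - 1`, and the quadratic formula splits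
the two quadratic factors into the conjugate pairs of the statement.
-/

open Matrix Polynomial

theorem det_symmTridiagonal_fin_five {R : Type*} [CommRing R] (a b q : R) :
    det !![a, q, 0, 0, 0;
           q, b, q, 0, 0;
           0, q, b, q, 0;
           0, 0, q, b, q;
           0, 0, 0, q, a] =
      a ^ 2 * b ^ 3 - 2 * a ^ 2 * b * q ^ 2 - 2 * a * b ^ 2 * q ^ 2 + 2 * a * q ^ 4 + b * q ^ 4 := by
  eval_det
  ring

theorem charmatrix_symmTridiagonal_fin_five {R : Type*} [CommRing R] (a b q : R) :
    charmatrix !![a, q, 0, 0, 0;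
                  q, b, q, 0, 0;
                  0, q, b, q, 0;
                  0, 0, q, b, q;
                  0, 0, 0, q, a] =
      !![X - C a, -C q, 0, 0, 0;
         -C q, X - C b, -C q, 0, 0;
         0, -C q, X - C b, -C q, 0;
         0, 0, -C q, X - C b, -C q;
         0, 0, 0, -C q, X - C a] := by
  ext i j
  fin_cases i <;> fin_cases j <;> simp

theorem charpoly_symmTridiagonal_fin_five {R : Type*} [CommRing R] (a b q : R) :
    charpoly !![a, q, 0, 0, 0;
                q, b, q, 0, 0;
                0, q, b, q, 0;
                0, 0, q, b, q;
                0, 0, 0, q, a] =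
      (X - C a) ^ 2 * (X - C b) ^ 3 - 2 * (X - C a) ^ 2 * (X - C b) * C q ^ 2
        - 2 * (X - C a) * (X - C b) ^ 2 * C q ^ 2 + 2 * (X - C a) * C q ^ 4
        + (X - C b) * C q ^ 4 := by
  rw [charpoly, charmatrix_symmTridiagonal_fin_five, det_symmTridiagonal_fin_five]
  ring

theorem stmt_1 (lam : ℝ) :
    let M : Matrix (Fin 5) (Fin 5) ℝ :=
      !![1+lam, -lam, 0, 0, 0;
         -lam, 1+2*lam, -lam, 0, 0;
         0, -lam, 1+2*lam, -lam, 0;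
         0, 0, -lam, 1+2*lam, -lam;
         0, 0, 0, -lam, 1+lam]
    M.charpoly =
      (X - C 1) * (X - C (1 + (5 + Real.sqrt 5)/2 * lam)) *
        (X - C (1 + (5 - Real.sqrt 5)/2 * lam)) *
        (X - C (1 + (3 + Real.sqrt 5)/2 * lam)) *
        (X - C (1 + (3 - Real.sqrt 5)/2 * lam)) := by
  intro M
  rw [charpoly_symmTridiagonal_fin_five]
  refine Polynomial.funext fun x => ?_
  simp only [eval_mul, eval_sub, eval_add, eval_pow, eval_X, eval_C, eval_ofNat]
  have hs : √5 ^ 2 = 5 := Real.sq_sqrt (by norm_num)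
  have h5 : (x - (1 + (5 + √5) / 2 * lam)) * (x - (1 + (5 - √5) / 2 * lam)) =
      (x - 1) ^ 2 - 5 * lam * (x - 1) + 5 * lam ^ 2 := by
    linear_combination -lam ^ 2 / 4 * hs
  have h3 : (x - (1 + (3 + √5) / 2 * lam)) * (x - (1 + (3 - √5) / 2 * lam)) =
      (x - 1) ^ 2 - 3 * lam * (x - 1) + lam ^ 2 := by
    linear_combination -lam ^ 2 / 4 * hs
  rw [mul_assoc _ (x - _) (x - (1 + (3 - √5) / 2 * lam)), h3,
    mul_assoc (x - 1) (x - _) (x - (1 + (5 - √5) / 2 * lam)), h5]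
  ring
end

section
/- The characteristic polynomial of N(λ) (as a polynomial in x) factors as (x − 1)·(x − (1 + (2−√2)λ))·(x − (1 + 2λ))·(x − (1 + (2+√2)λ)), i.e., the eigenvalues of N(λ) are 1, 1 + (2−√2)λ, 1 + 2λ, and 1 + (2+√2)λ. -/
/-! Cofactor expansion gives the characteristic polynomial as
`(X - 1)(X - (1 + 2λ))((X - (1 + 2λ))² - 2λ²)`, and the quadratic factor splits as
`(X - (1 + 2λ - √2 λ))(X - (1 + 2λ + √2 λ))`. -/

open Matrix Polynomial

section

variable {R : Type*} [CommRing R]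

theorem charpoly_busMatrix (lam : R) :
    (!![1+lam, -lam, 0, 0;
        -lam, 1+2*lam, -lam, 0;
        0, -lam, 1+2*lam, -lam;
        0, 0, -lam, 1+lam] : Matrix (Fin 4) (Fin 4) R).charpoly =
      (X - C 1) * (X - C (1 + 2 * lam)) * ((X - C (1 + 2 * lam)) ^ 2 - C (2 * lam ^ 2)) := by
  have succ_two : (Fin.succ 2 : Fin 4) = 3 := rfl
  have succAbove_one_two : Fin.succAbove (1 : Fin 4) 2 = 3 := rfl
  simp [Matrix.charpoly, Matrix.det_succ_row_zero, Fin.sum_univ_succ, charmatrix_apply, map_ofNat,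
    succ_two, succAbove_one_two]
  ring

theorem X_sub_C_sub_mul_X_sub_C_add (a s : R) :
    (X - C (a - s)) * (X - C (a + s)) = (X - C a) ^ 2 - C (s ^ 2) := by
  simp only [map_sub, map_add, map_pow]
  ring

end

theorem stmt_2 (lam : ℝ) :
    let N : Matrix (Fin 4) (Fin 4) ℝ :=
      !![1+lam, -lam, 0, 0;
         -lam, 1+2*lam, -lam, 0;
         0, -lam, 1+2*lam, -lam;
         0, 0, -lam, 1+lam]
    N.charpoly =
      (X - C 1) * (X - C (1 + (2 - Real.sqrt 2) * lam)) *
        (X - C (1 + 2 * lam)) * (X - C (1 + (2 + Real.sqrt 2) * lam)) := by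
  intro N
  have hminus : 1 + (2 - √2) * lam = 1 + 2 * lam - √2 * lam := by ring
  have hplus : 1 + (2 + √2) * lam = 1 + 2 * lam + √2 * lam := by ring
  have hsq : (√2 * lam) ^ 2 = 2 * lam ^ 2 := by
    rw [mul_pow, Real.sq_sqrt zero_le_two]
  rw [charpoly_busMatrix, hminus, hplus, ← hsq, ← X_sub_C_sub_mul_X_sub_C_add]
  ring
end

section
/- The matrix D satisfies the identity D⁷ = D⁵ + D⁴. -/
open Matrix

theorem stmt_4 :
    let D : Matrix (Fin 7) (Fin 7) ℤ :=
      !![0,0,0,0,0,1,1;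
         0,0,0,0,1,0,0;
         0,1,0,0,0,0,0;
         1,0,0,0,0,0,0;
         0,0,1,1,0,0,0;
         0,1,0,0,0,0,0;
         1,0,0,0,0,0,0]
    D ^ 7 = D ^ 5 + D ^ 4 := by
  decide +kernel
end

section
/- For every n ≥ 8 (with n ∈ ℕ), a(n) = a(n−2) + a(n−3), where a(n) := V·D^{n−5}·Vᵀ. -/
/-! The all-ones row vector `V` satisfies `V D³ = V D + V`, as a direct computation shows;
multiplying on the right by `D ^ k Vᵀ` turns this into the recurrence `a (k + 3) = a (k + 1) + a k`. -/

open Matrix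

theorem dotProduct_pow_mulVec_add_three {ι R : Type*} [Fintype ι] [DecidableEq ι] [CommSemiring R]
    {D : Matrix ι ι R} {u : ι → R} (hu : u ᵥ* D ^ 3 = u ᵥ* D + u) (v : ι → R) (k : ℕ) :
    u ⬝ᵥ (D ^ (k + 3) *ᵥ v) = u ⬝ᵥ (D ^ (k + 1) *ᵥ v) + u ⬝ᵥ (D ^ k *ᵥ v) := by
  rw [add_comm k, add_comm k, pow_add, pow_add, pow_one, ← mulVec_mulVec, ← mulVec_mulVec,
    dotProduct_mulVec, hu, add_dotProduct, ← dotProduct_mulVec]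

def codebookMatrix : Matrix (Fin 7) (Fin 7) ℤ :=
  !![0,0,0,0,0,1,1;
     0,0,0,0,1,0,0;
     0,1,0,0,0,0,0;
     1,0,0,0,0,0,0;
     0,0,1,1,0,0,0;
     0,1,0,0,0,0,0;
     1,0,0,0,0,0,0]

theorem one_vecMul_codebookMatrix_pow_three :
    (fun _ => 1) ᵥ* codebookMatrix ^ 3 = (fun _ => 1) ᵥ* codebookMatrix + fun _ => 1 := by
  rw [pow_three, ← vecMul_vecMul, ← vecMul_vecMul]
  ext i; fin_cases i <;> rfl

theorem stmt_5 :
    let D : Matrix (Fin 7) (Fin 7) ℤ :=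
      !![0,0,0,0,0,1,1;
         0,0,0,0,1,0,0;
         0,1,0,0,0,0,0;
         1,0,0,0,0,0,0;
         0,0,1,1,0,0,0;
         0,1,0,0,0,0,0;
         1,0,0,0,0,0,0]
    let V : Fin 7 → ℤ := fun _ => 1
    let a : ℕ → ℤ := fun n => V ⬝ᵥ ((D ^ (n - 5)) *ᵥ V)
    ∀ n : ℕ, 8 ≤ n → a n = a (n - 2) + a (n - 3) := by
  intro D V a n hn
  obtain ⟨k, rfl⟩ := Nat.exists_eq_add_of_le' hn
  simp only [a, show k + 8 - 5 = k + 3 by omega, show k + 8 - 2 - 5 = k + 1 by omega,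
    show k + 8 - 3 - 5 = k by omega]
  exact dotProduct_pow_mulVec_add_three one_vecMul_codebookMatrix_pow_three V k
end

section
/- Let G : ℕ → ℕ satisfy G(1)=2, G(2)=3, G(3)=4, G(4)=5, G(5)=7, and G(n) = G(n−1) + G(n−5) for all n ≥ 6. Then G(n) = G(n−2) + G(n−3) for all n ≥ 6. -/
theorem stmt_7 (G : ℕ → ℕ) (h1 : G 1 = 2) (h2 : G 2 = 3) (h3 : G 3 = 4)
    (h4 : G 4 = 5) (h5 : G 5 = 7)
    (hrec : ∀ n : ℕ, 6 ≤ n → G n = G (n - 1) + G (n - 5)) :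
    ∀ n : ℕ, 6 ≤ n → G n = G (n - 2) + G (n - 3) := by
  intro n
  induction n using Nat.strong_induction_on with
  | _ n ih =>
    intro hn
    match n, hn with
    | 6, _ => simp [hrec 6 (by norm_num), h1, h2, h3, h4, h5]
    | 7, _ => simp [hrec 7 (by norm_num), hrec 6 (by norm_num), h1, h2, h3, h4, h5]
    | (m+8), _ =>
      have e1 := hrec (m+8) (by omega)
      have e2 := ih (m+7) (by omega) (by omega)
      have e3 := ih (m+6) (by omega) (by omega)
      simp only [show m+8-1 = m+7 by omega, show m+8-5 = m+3 by omega,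
        show m+7-2 = m+5 by omega, show m+7-3 = m+4 by omega,
        show m+6-2 = m+4 by omega, show m+6-3 = m+3 by omega,
        show m+8-2 = m+6 by omega, show m+8-3 = m+5 by omega] at *
      omega
end

section
/- Let G : ℕ → ℕ satisfy G(1)=2, G(2)=3, G(3)=4, G(4)=5, G(5)=7 and G(n) = G(n−1) + G(n−5) for n ≥ 6, and let a : ℕ → ℕ satisfy a(5)=7, a(6)=9, a(7)=12 and a(n) = a(n−2) + a(n−3) for n ≥ 8. Then a(n) = G(n) for all n ≥ 5. -/
theorem stmt_8 (G a : ℕ → ℕ) (h1 : G 1 = 2) (h2 : G 2 = 3) (h3 : G 3 = 4)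
    (h4 : G 4 = 5) (h5 : G 5 = 7)
    (hG : ∀ n : ℕ, 6 ≤ n → G n = G (n - 1) + G (n - 5))
    (ha5 : a 5 = 7) (ha6 : a 6 = 9) (ha7 : a 7 = 12)
    (ha : ∀ n : ℕ, 8 ≤ n → a n = a (n - 2) + a (n - 3)) :
    ∀ n : ℕ, 5 ≤ n → a n = G n := by
  have hG' : ∀ k : ℕ, G (k + 6) = G (k + 5) + G (k + 1) := by
    intro k
    have := hG (k + 6) (by omega)
    have e1 : k + 6 - 1 = k + 5 := by omega
    have e2 : k + 6 - 5 = k + 1 := by omega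
    rwa [e1, e2] at this
  have g6 : G 6 = 9 := by have := hG' 0; norm_num at this; rw [this, h5, h1]
  have g7 : G 7 = 12 := by have := hG' 1; norm_num at this; rw [this, g6, h2]
  have g8 : G 8 = 16 := by have := hG' 2; norm_num at this; rw [this, g7, h3]
  have g9 : G 9 = 21 := by have := hG' 3; norm_num at this; rw [this, g8, h4]
  have g10 : G 10 = 28 := by have := hG' 4; norm_num at this; rw [this, g9, h5]
  have g11 : G 11 = 37 := by have := hG' 5; norm_num at this; rw [this, g10, g6]
  have g12 : G 12 = 49 := by have := hG' 6; norm_num at this; rw [this, g11, g7]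
  have key : ∀ m : ℕ, G (m + 8) = G (m + 6) + G (m + 5) := by
    intro m
    induction m using Nat.strong_induction_on with
    | _ m ih =>
      match m, ih with
      | 0, _ => norm_num [g8, g6, h5]
      | 1, _ => norm_num [g9, g7, g6]
      | 2, _ => norm_num [g10, g8, g7]
      | 3, _ => norm_num [g11, g9, g8]
      | 4, _ => norm_num [g12, g10, g9]
      | (j+5), ih =>
        have h1' := hG' (j + 7)
        have h2' := hG' (j + 5)
        have h3' := hG' (j + 4)
        have i1 := ih (j + 4) (by omega)
        have i2 := ih j (by omega)
        have c1 : j + 7 + 6 = j + 13 := by omega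
        have c2 : j + 7 + 5 = j + 12 := by omega
        have c3 : j + 7 + 1 = j + 8 := by omega
        have c4 : j + 5 + 6 = j + 11 := by omega
        have c5 : j + 5 + 5 = j + 10 := by omega
        have c6 : j + 5 + 1 = j + 6 := by omega
        have c7 : j + 4 + 6 = j + 10 := by omega
        have c8 : j + 4 + 5 = j + 9 := by omega
        have c9 : j + 4 + 1 = j + 5 := by omega
        have c10 : j + 4 + 8 = j + 12 := by omega
        have c11 : j + 5 + 8 = j + 13 := by omega
        rw [c1, c2, c3] at h1'
        rw [c4, c5, c6] at h2'
        rw [c7, c8, c9] at h3'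
        rw [c10, c7, c8] at i1
        rw [c11, c4, c5]
        linarith
  intro n hn
  obtain ⟨m, rfl⟩ : ∃ m, n = m + 5 := ⟨n - 5, by omega⟩
  clear hn
  induction m using Nat.strong_induction_on with
  | _ m ih =>
    match m, ih with
    | 0, _ => rw [ha5, h5]
    | 1, _ => rw [ha6, g6]
    | 2, _ => rw [ha7, g7]
    | (j+3), ih =>
      have h := ha (j + 3 + 5) (by omega)
      have e1 : j + 3 + 5 - 2 = j + 1 + 5 := by omega
      have e2 : j + 3 + 5 - 3 = j + 5 := by omega
      rw [e1, e2] at h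
      rw [h, ih (j+1) (by omega), ih j (by omega)]
      have k := key j
      have e3 : j + 8 = j + 3 + 5 := by omega
      have e4 : j + 6 = j + 1 + 5 := by omega
      rw [e3, e4] at k
      linarith [k]
end

section
/- Let a : ℕ → ℕ satisfy a(5)=16, a(6)=26, a(7)=42, a(8)=68, and a(n) = 2a(n−1) − a(n−2) + a(n−4) for n ≥ 9. Then a(n) = 2·F(n+1) for all n ≥ 5, where F is the Fibonacci sequence with F(1)=F(2)=1. -/
theorem stmt_11 (a F : ℕ → ℕ) (hF1 : F 1 = 1) (hF2 : F 2 = 1)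
    (hF : ∀ n : ℕ, F (n + 2) = F (n + 1) + F n)
    (ha5 : a 5 = 16) (ha6 : a 6 = 26) (ha7 : a 7 = 42) (ha8 : a 8 = 68)
    (ha : ∀ n : ℕ, 9 ≤ n →
      (a n : ℤ) = 2 * a (n - 1) - a (n - 2) + a (n - 4)) :
    ∀ n : ℕ, 5 ≤ n → a n = 2 * F (n + 1) := by
  have key : ∀ k : ℕ, a (5 + k) = 2 * F (6 + k) ∧ a (6 + k) = 2 * F (7 + k) ∧
      a (7 + k) = 2 * F (8 + k) ∧ a (8 + k) = 2 * F (9 + k) := by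
    intro k
    induction k with
    | zero =>
      have h3 := hF 1; have h4 := hF 2; have h5 := hF 3; have h6 := hF 4
      have h7 := hF 5; have h8 := hF 6; have h9 := hF 7
      norm_num at *
      omega
    | succ k ih =>
      obtain ⟨h1, h2, h3, h4⟩ := ih
      have g1 : F (10 + k) = F (9 + k) + F (8 + k) := by
        have := hF (8 + k)
        rw [show 8 + k + 2 = 10 + k from by omega,
            show 8 + k + 1 = 9 + k from by omega] at this
        exact this
      have g2 : F (9 + k) = F (8 + k) + F (7 + k) := by
        have := hF (7 + k)
        rw [show 7 + k + 2 = 9 + k from by omega,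
            show 7 + k + 1 = 8 + k from by omega] at this
        exact this
      have g3 : F (8 + k) = F (7 + k) + F (6 + k) := by
        have := hF (6 + k)
        rw [show 6 + k + 2 = 8 + k from by omega,
            show 6 + k + 1 = 7 + k from by omega] at this
        exact this
      have hrec := ha (9 + k) (by omega)
      rw [show 9 + k - 1 = 8 + k from by omega,
          show 9 + k - 2 = 7 + k from by omega,
          show 9 + k - 4 = 5 + k from by omega, h4, h3, h1] at hrec
      have hnew : a (9 + k) = 2 * F (10 + k) := by
        have : (a (9 + k) : ℤ) = 2 * F (10 + k) := by push_cast [g1, g2, g3] at hrec ⊢; linarith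
        exact_mod_cast this
      refine ⟨?_, ?_, ?_, ?_⟩
      · rw [show 5 + (k + 1) = 6 + k from by omega, show 6 + (k + 1) = 7 + k from by omega]
        exact h2
      · rw [show 6 + (k + 1) = 7 + k from by omega, show 7 + (k + 1) = 8 + k from by omega]
        exact h3
      · rw [show 7 + (k + 1) = 8 + k from by omega, show 8 + (k + 1) = 9 + k from by omega]
        exact h4
      · rw [show 8 + (k + 1) = 9 + k from by omega, show 9 + (k + 1) = 10 + k from by omega]
        exact hnew
  intro n hn
  obtain ⟨k, rfl⟩ : ∃ k, n = 5 + k := ⟨n - 5, by omega⟩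
  rw [show 5 + k + 1 = 6 + k from by omega]
  exact (key k).1
end

section
/- Let a : ℕ → ℕ satisfy a(5)=6, a(6)=7, a(7)=9, a(8)=11, a(9)=14 and a(n) = a(n−2) + a(n−5) for n ≥ 10, and let G : ℕ → ℕ satisfy G(1)=2, G(2)=3, G(3)=4, G(4)=5, G(5)=7 and G(n) = G(n−1) + G(n−5) for n ≥ 6. Then a(n) ≤ G(n) for all n ≥ 5. -/
/-!
A sequence with `G n = G (n - 1) + G (n - k)` is nondecreasing, so `G (n - 2) ≤ G (n - 1)`.
Hence once `a ≤ G` on five consecutive indices, strong induction propagates it: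
`a n = a (n - 2) + a (n - 5) ≤ G (n - 1) + G (n - 5) = G n`.
-/

theorem le_succ_of_eq_pred_add {G : ℕ → ℕ} {N k : ℕ}
    (hG : ∀ n, N ≤ n → G n = G (n - 1) + G (n - k)) {m : ℕ} (hm : N ≤ m + 1) :
    G m ≤ G (m + 1) := by
  have h := hG (m + 1) hm
  rw [Nat.add_sub_cancel] at h
  omega

theorem le_of_le_on_window {a G : ℕ → ℕ} {N : ℕ}
    (ha : ∀ n, N + 5 ≤ n → a n = a (n - 2) + a (n - 5))
    (hG : ∀ n, N + 5 ≤ n → G n = G (n - 1) + G (n - 5))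
    (hG_mono : ∀ m, N + 3 ≤ m → G m ≤ G (m + 1))
    (hwindow : ∀ n, N ≤ n → n < N + 5 → a n ≤ G n) :
    ∀ n, N ≤ n → a n ≤ G n := by
  intro n
  induction n using Nat.strong_induction_on with
  | _ n ih =>
    intro hn
    by_cases hsmall : n < N + 5
    · exact hwindow n hn hsmall
    have h2 := ih (n - 2) (by omega) (by omega)
    have h5 := ih (n - 5) (by omega) (by omega)
    have hmono : G (n - 2) ≤ G (n - 1) := by
      simpa [show n - 2 + 1 = n - 1 by omega] using hG_mono (n - 2) (by omega)
    rw [ha n (by omega), hG n (by omega)]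
    omega

theorem stmt_15 (a G : ℕ → ℕ)
    (ha5 : a 5 = 6) (ha6 : a 6 = 7) (ha7 : a 7 = 9) (ha8 : a 8 = 11)
    (ha9 : a 9 = 14)
    (ha : ∀ n : ℕ, 10 ≤ n → a n = a (n - 2) + a (n - 5))
    (hG1 : G 1 = 2) (hG2 : G 2 = 3) (hG3 : G 3 = 4) (hG4 : G 4 = 5)
    (hG5 : G 5 = 7)
    (hG : ∀ n : ℕ, 6 ≤ n → G n = G (n - 1) + G (n - 5)) :
    ∀ n : ℕ, 5 ≤ n → a n ≤ G n := by
  have hG6 : G 6 = 9 := by simpa [hG5, hG1] using hG 6 le_rfl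
  have hG7 : G 7 = 12 := by simpa [hG6, hG2] using hG 7 (by norm_num)
  have hG8 : G 8 = 16 := by simpa [hG7, hG3] using hG 8 (by norm_num)
  have hG9 : G 9 = 21 := by simpa [hG8, hG4] using hG 9 (by norm_num)
  refine le_of_le_on_window ha (fun n hn => hG n (by omega))
    (fun m hm => le_succ_of_eq_pred_add hG (by omega)) ?_
  intro n hn hn'
  interval_cases n <;> omega
end
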